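/- arXiv:2111.13415 — 2 statements merged into one kernel-verified Lean document; each statement's English description precedes it below -/
import Mathlib

section
/- Let f : ℝ → ℝ be continuous, T_min < T_max, ε > 0, L > 0, and let K : ℝ≥0 → ℝ≥0 be a strictly increasing continuous bijection onto its range with K(0) = 0, with pseudometric q(d,d') = K(|d−d'|). Define the reachability operator R_ε(S) = S ∪ { d : ∃ d' ∈ S, f(d') − L·q(d,d') − ε ≥ T_min and f(d') + L·q(d,d') + ε ≤ T_max }. Suppose d, d* ∈ ℝ with a safe path between them: η := min over the closed interval between d and d* of min(T_max − ε − f, f − T_min − ε) > 0. Then there exists m ∈ ℕ such that d* ∈ R_ε^m({d}), where R_ε^m denotes the m-fold iterate; moreover m can be taken as the least integer with m·K⁻¹(η/L) ≥ |d* − d|. -/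
open Set

/-!
Since `η` bounds both safety margins along the segment between `d` and `dstar`, one step of
`Reach` may move from any point `d'` of the segment to any `x` with `L * K |x - d'| ≤ η`, in
particular to any `x` within `δ = K⁻¹(η / L)` of `d'`. Walking from `d` towards `dstar` in
steps of length at most `δ` therefore reaches every point of the segment at distance at most
`k * δ` from `d` after `k` steps, and `dstar` after `⌈|dstar - d| / δ⌉` steps.
-/

/-- The `ε`-reachability operator for a safety interval `[Tmin, Tmax]`,
with pseudometric `q(d,d') = K |d - d'|`. -/
def Reach (f : ℝ → ℝ) (K : ℝ → ℝ) (L Tmin Tmax ε : ℝ) (S : Set ℝ) : Set ℝ :=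
  S ∪ {d | ∃ d' ∈ S, Tmin ≤ f d' - L * K |d - d'| - ε ∧
                      f d' + L * K |d - d'| + ε ≤ Tmax}

lemma exists_mem_uIcc_abs_sub_le {d x a b : ℝ} (ha : 0 ≤ a) (hb : 0 ≤ b)
    (hx : |x - d| ≤ a + b) : ∃ y ∈ uIcc d x, |y - d| ≤ a ∧ |x - y| ≤ b := by
  rw [abs_le] at hx
  rcases le_total d x with hdx | hxd
  · have hdy : d ≤ max d (x - b) := le_max_left _ _
    have hxy : x - b ≤ max d (x - b) := le_max_right _ _
    have hyx : max d (x - b) ≤ x := max_le hdx (by linarith)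
    have hya : max d (x - b) ≤ d + a := max_le (by linarith) (by linarith)
    refine ⟨max d (x - b), ?_, abs_le.2 ⟨by linarith, by linarith⟩,
      abs_le.2 ⟨by linarith, by linarith⟩⟩
    rw [uIcc_of_le hdx]
    exact ⟨hdy, hyx⟩
  · have hyd : min d (x + b) ≤ d := min_le_left _ _
    have hyx : min d (x + b) ≤ x + b := min_le_right _ _
    have hxy : x ≤ min d (x + b) := le_min hxd (by linarith)
    have hay : d - a ≤ min d (x + b) := le_min (by linarith) (by linarith)
    refine ⟨min d (x + b), ?_, abs_le.2 ⟨by linarith, by linarith⟩,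
      abs_le.2 ⟨by linarith, by linarith⟩⟩
    rw [uIcc_of_ge hxd]
    exact ⟨hxy, hyd⟩

section Reach

variable {f K : ℝ → ℝ} {L Tmin Tmax ε η : ℝ}

lemma mem_reach_of_margin {S : Set ℝ} {d' x : ℝ} (hd' : d' ∈ S)
    (hmax : η ≤ Tmax - ε - f d') (hmin : η ≤ f d' - Tmin - ε) (hx : L * K |x - d'| ≤ η) :
    x ∈ Reach f K L Tmin Tmax ε S :=
  Or.inr ⟨d', hd', by linarith, by linarith⟩

lemma mem_iterate_reach_of_abs_sub_le {I : Set ℝ} [I.OrdConnected] {d δ : ℝ} (hd : d ∈ I)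
    (hmargin : ∀ y ∈ I, η ≤ Tmax - ε - f y ∧ η ≤ f y - Tmin - ε)
    (hL : 0 ≤ L) (hK : MonotoneOn K (Ici 0)) (hδ : 0 ≤ δ) (hKδ : L * K δ ≤ η) :
    ∀ k : ℕ, ∀ x ∈ I, |x - d| ≤ k * δ → x ∈ (Reach f K L Tmin Tmax ε)^[k] {d} := by
  intro k
  induction k with
  | zero =>
    intro x _ hx
    simpa [sub_eq_zero] using hx
  | succ k ih =>
    intro x hx hxd
    obtain ⟨y, hy, hyd, hxy⟩ :=
      exists_mem_uIcc_abs_sub_le (a := k * δ) (by positivity) hδ (by push_cast at hxd; linarith)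
    have hyI : y ∈ I := OrdConnected.uIcc_subset ‹_› hd hx hy
    rw [Function.iterate_succ_apply']
    refine mem_reach_of_margin (ih y hyI hyd) (hmargin y hyI).1 (hmargin y hyI).2 ?_
    calc L * K |x - y| ≤ L * K δ :=
          mul_le_mul_of_nonneg_left (hK (abs_nonneg (x - y)) hδ hxy) hL
      _ ≤ η := hKδ

end Reach

theorem stmt_8_general (f : ℝ → ℝ) (hf : Continuous f)
    (Tmin Tmax ε L : ℝ) (hL : 0 < L)
    (K : ℝ → ℝ) (hK0 : K 0 = 0) (hKmono : StrictMonoOn K (Ici 0))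
    (d dstar : ℝ)
    (η : ℝ)
    (hη_def : η = min (sInf ((fun x => Tmax - ε - f x) '' uIcc d dstar))
                     (sInf ((fun x => f x - Tmin - ε) '' uIcc d dstar)))
    (hη : 0 < η)
    (δ : ℝ) (hδnn : 0 ≤ δ) (hδ : K δ = η / L) :
    ∃ m : ℕ, dstar ∈ (Reach f K L Tmin Tmax ε)^[m] {d} ∧
      |dstar - d| ≤ (m : ℝ) * δ ∧
      ∀ m' : ℕ, |dstar - d| ≤ (m' : ℝ) * δ → m ≤ m' := by
  have hδpos : 0 < δ := hδnn.lt_of_ne fun h => by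
    rw [← h, hK0] at hδ
    exact (div_pos hη hL).ne hδ
  have hmargin : ∀ y ∈ uIcc d dstar, η ≤ Tmax - ε - f y ∧ η ≤ f y - Tmin - ε := fun y hy =>
    ⟨(hη_def ▸ min_le_left _ _).trans <|
        csInf_le (isCompact_uIcc.image (by fun_prop)).bddBelow ⟨y, hy, rfl⟩,
      (hη_def ▸ min_le_right _ _).trans <|
        csInf_le (isCompact_uIcc.image (by fun_prop)).bddBelow ⟨y, hy, rfl⟩⟩
  have hceil : ∀ m : ℕ, ⌈|dstar - d| / δ⌉₊ ≤ m ↔ |dstar - d| ≤ m * δ := fun m => by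
    rw [Nat.ceil_le, div_le_iff₀ hδpos]
  refine ⟨⌈|dstar - d| / δ⌉₊, ?_, (hceil _).1 le_rfl, fun m' => (hceil m').2⟩
  exact mem_iterate_reach_of_abs_sub_le left_mem_uIcc hmargin hL.le hKmono.monotoneOn hδnn
    (by rw [hδ, mul_div_cancel₀ _ hL.ne']) _ dstar right_mem_uIcc ((hceil _).1 le_rfl)

/-- Lemma 4 (reachability along a safe path): if there is a safe path between
`d` and `d*`, then `d* ∈ R_ε^m({d})` for some finite `m`, which can be taken as
the least integer with `m · K⁻¹(η/L) ≥ |d* − d|`. -/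
theorem stmt_8 (f : ℝ → ℝ) (hf : Continuous f)
    (Tmin Tmax ε L : ℝ) (hT : Tmin < Tmax) (hε : 0 < ε) (hL : 0 < L)
    (K : ℝ → ℝ) (hK0 : K 0 = 0) (hKmono : StrictMonoOn K (Ici 0))
    (hKcont : Continuous K)
    (d dstar : ℝ)
    (η : ℝ)
    (hη_def : η = min (sInf ((fun x => Tmax - ε - f x) '' uIcc d dstar))
                     (sInf ((fun x => f x - Tmin - ε) '' uIcc d dstar)))
    (hη : 0 < η)
    (δ : ℝ) (hδnn : 0 ≤ δ) (hδ : K δ = η / L) :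
    ∃ m : ℕ, dstar ∈ (Reach f K L Tmin Tmax ε)^[m] {d} ∧
      |dstar - d| ≤ (m : ℝ) * δ ∧
      ∀ m' : ℕ, |dstar - d| ≤ (m' : ℝ) * δ → m ≤ m' :=
  stmt_8_general f hf Tmin Tmax ε L hL K hK0 hKmono d dstar η hη_def hη δ hδnn hδ
end

section
/- Safety by induction (Theorem 1 core step): Suppose the event E holds, i.e., for all n and all doses d, l̄_n(d) ≤ f(d) ≤ ū_n(d), where l̄_n and ū_n are lower/upper confidence bounds, and f is L-Lipschitz w.r.t. q. Define S_n = S_{n-1} ∪ ⋃_{d ∈ S_{n-1}} { d' : l̄_n(d) − L·q(d,d') ≥ T_min and ū_n(d) + L·q(d,d') ≤ T_max }. If T_min ≤ f(d) ≤ T_max for all d ∈ S_0, then for every n, T_min ≤ f(d) ≤ T_max for all d ∈ S_n. -/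
theorem mem_Icc_of_abs_sub_le_of_margin {x y δ lo hi a b : ℝ} (hxy : |x - y| ≤ δ)
    (hlo : lo ≤ x) (hhi : x ≤ hi) (ha : a ≤ lo - δ) (hb : hi + δ ≤ b) :
    y ∈ Set.Icc a b := by
  obtain ⟨hlow, hupp⟩ := abs_le.mp hxy
  constructor <;> linarith

theorem stmt_10_general {D : Type*} (f : D → ℝ) (q : D → D → ℝ) (L Tmin Tmax : ℝ)
    (hLip : ∀ d d', |f d - f d'| ≤ L * q d d')
    (lb ub : ℕ → D → ℝ)
    (hE : ∀ n d, lb n d ≤ f d ∧ f d ≤ ub n d)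
    (S : ℕ → Set D)
    (hS : ∀ n : ℕ, S (n + 1) = S n ∪
      ⋃ d ∈ S n, {d' | Tmin ≤ lb (n + 1) d - L * q d d' ∧
                        ub (n + 1) d + L * q d d' ≤ Tmax})
    (hS0 : ∀ d ∈ S 0, Tmin ≤ f d ∧ f d ≤ Tmax) :
    ∀ n : ℕ, ∀ d ∈ S n, Tmin ≤ f d ∧ f d ≤ Tmax := by
  intro n
  induction n with
  | zero => exact hS0
  | succ n ih =>
    rw [hS n]
    rintro d' (hold | hnew)
    · exact ih d' hold
    · obtain ⟨d, -, hmin, hmax⟩ := Set.mem_iUnion₂.mp hnew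
      exact mem_Icc_of_abs_sub_le_of_margin (hLip d d') (hE (n + 1) d).1 (hE (n + 1) d).2
        hmin hmax

/-- Safety by induction (Theorem 1 core step): under the good event, every
dose in every expanded safe set `Sₙ` satisfies the safety constraints. -/
theorem stmt_10 {D : Type*} (f : D → ℝ) (q : D → D → ℝ) (L Tmin Tmax : ℝ)
    (hL : 0 < L) (hT : Tmin ≤ Tmax)
    (hLip : ∀ d d', |f d - f d'| ≤ L * q d d')
    (lb ub : ℕ → D → ℝ)
    (hE : ∀ n d, lb n d ≤ f d ∧ f d ≤ ub n d)
    (S : ℕ → Set D)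
    (hS : ∀ n : ℕ, S (n + 1) = S n ∪
      ⋃ d ∈ S n, {d' | Tmin ≤ lb (n + 1) d - L * q d d' ∧
                        ub (n + 1) d + L * q d d' ≤ Tmax})
    (hS0 : ∀ d ∈ S 0, Tmin ≤ f d ∧ f d ≤ Tmax) :
    ∀ n : ℕ, ∀ d ∈ S n, Tmin ≤ f d ∧ f d ≤ Tmax :=
  stmt_10_general f q L Tmin Tmax hLip lb ub hE S hS hS0
end
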